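/- arXiv:math/0511454 — 2 statements merged into one kernel-verified Lean document; each statement's English description precedes it below -/
import Mathlib

section
/- For every v′ ∈ V′ one has Σ_{v∈V} (e − ξ̃(v)^{−1}) s(v,v′) = e − ξ̃′(v′)^{−1} in ℤ[G]. -/
open scoped Classical

/-- X is a Cantor set: nonempty, compact, metrizable, totally disconnected, and
without isolated points. -/
def IsCantor (X : Type*) [TopologicalSpace X] : Prop :=
  Nonempty X ∧ CompactSpace X ∧ TopologicalSpace.MetrizableSpace X ∧
    TotallyDisconnectedSpace X ∧ Perfect (Set.univ : Set X)

/-- A homeomorphism is minimal if every (two-sided) orbit is dense. -/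
def IsMinimalHomeo {X : Type*} [TopologicalSpace X] (φ : X ≃ₜ X) : Prop :=
  ∀ x : X, Dense (Set.range fun k : ℤ => (φ.toEquiv ^ k) x)

/-- A Kakutani–Rohlin partition 𝒫 = {X(v,k) : v ∈ V, 1 ≤ k ≤ h(v)} of (X,φ):
a partition of X into nonempty clopen sets with φ(X(v,k)) = X(v,k+1) for k < h(v). -/
structure KRPartition (X : Type) [TopologicalSpace X] (φ : X ≃ₜ X) (V : Type) where
  height : V → ℕ
  height_pos : ∀ v, 1 ≤ height v
  piece : V → ℕ → Set X
  piece_nonempty : ∀ v k, 1 ≤ k → k ≤ height v → (piece v k).Nonempty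
  piece_clopen : ∀ v k, 1 ≤ k → k ≤ height v → IsClopen (piece v k)
  partition : ∀ x : X, ∃! p : V × ℕ, (1 ≤ p.2 ∧ p.2 ≤ height p.1) ∧ x ∈ piece p.1 p.2
  tower : ∀ v k, 1 ≤ k → k + 1 ≤ height v → φ '' piece v k = piece v (k + 1)

/-- The roof set R(𝒫) = ∪_v X(v, h(v)). -/
def KRPartition.roof {X : Type} [TopologicalSpace X] {φ : X ≃ₜ X} {V : Type}
    (P : KRPartition X φ V) : Set X :=
  ⋃ v, P.piece v (P.height v)

/-- ξ is constant on each member of 𝒫. -/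
def KRPartition.ConstCocycle {X : Type} [TopologicalSpace X] {φ : X ≃ₜ X} {V : Type}
    {G : Type} [TopologicalSpace G] [CommGroup G]
    (P : KRPartition X φ V) (ξ : C(X, G)) : Prop :=
  ∀ v k, 1 ≤ k → k ≤ P.height v →
    ∀ x ∈ P.piece v k, ∀ y ∈ P.piece v k, ξ x = ξ y

/-- 𝒫′ is finer than 𝒫: every member of 𝒫′ is contained in some member of 𝒫. -/
def KRPartition.Finer {X : Type} [TopologicalSpace X] {φ : X ≃ₜ X} {V V' : Type}
    (P' : KRPartition X φ V') (P : KRPartition X φ V) : Prop :=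
  ∀ v' k', 1 ≤ k' → k' ≤ P'.height v' →
    ∃ v k, 1 ≤ k ∧ k ≤ P.height v ∧ P'.piece v' k' ⊆ P.piece v k

/-- Lemma 3.5 (connect, part 1): for every tower v′ of the finer partition 𝒫′,
Σ_{v∈V} (e − ξ̃(v)⁻¹) s(v,v′) = e − ξ̃′(v′)⁻¹ in ℤ[G], where
s(v,v′) = Σ_{k ∈ E(v,v′)} ξ̃′(v′,k)⁻¹ and E(v,v′) = {k : X′(v′,k) ⊆ X(v,1)}. -/
theorem statement15
    (X : Type) [TopologicalSpace X] (hX : IsCantor X)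
    (φ : X ≃ₜ X) (hφ : IsMinimalHomeo φ)
    (G : Type) [TopologicalSpace G] [DiscreteTopology G] [CommGroup G] [Fintype G]
    (ξ : C(X, G))
    (V V' : Type) [Fintype V] [Fintype V']
    (P : KRPartition X φ V) (P' : KRPartition X φ V')
    (hconst : P.ConstCocycle ξ)
    (hfiner : P'.Finer P)
    (hroof : P'.roof ⊆ P.roof)
    -- ξ̃(v) for the partition 𝒫
    (ξt : V → G)
    (hξt : ∀ v, ∀ x ∈ P.piece v 1,
      ξt v = ∏ j ∈ Finset.range (P.height v), ξ ((⇑φ)^[j] x))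
    -- ξ̃′(v′) and ξ̃′(v′,k) for the partition 𝒫′
    (ξt' : V' → G)
    (hξt' : ∀ v', ∀ x ∈ P'.piece v' 1,
      ξt' v' = ∏ j ∈ Finset.range (P'.height v'), ξ ((⇑φ)^[j] x))
    (ξtk' : V' → ℕ → G)
    (hξtk' : ∀ v' k, 1 ≤ k → k ≤ P'.height v' → ∀ x ∈ P'.piece v' 1,
      ξtk' v' k = ∏ j ∈ Finset.range (k - 1), ξ ((⇑φ)^[j] x)) :
    ∀ v' : V',
      ∑ v : V,
        (1 - MonoidAlgebra.of ℤ G ((ξt v)⁻¹)) *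
          (∑ k ∈ Finset.Icc 1 (P'.height v'),
            if P'.piece v' k ⊆ P.piece v 1 then MonoidAlgebra.of ℤ G ((ξtk' v' k)⁻¹) else 0)
        = 1 - MonoidAlgebra.of ℤ G ((ξt' v')⁻¹) := by
  classical
  intro v'
  set h' := P'.height v' with hh'def
  have hh'pos : 1 ≤ h' := P'.height_pos v'
  obtain ⟨x, hx⟩ := P'.piece_nonempty v' 1 le_rfl hh'pos
  -- uniqueness for P
  have uniq : ∀ (z : X) (v : V) (k : ℕ) (w : V) (j : ℕ), 1 ≤ k → k ≤ P.height v →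
      1 ≤ j → j ≤ P.height w → z ∈ P.piece v k → z ∈ P.piece w j → v = w ∧ k = j := by
    intro z v k w j h1 h2 h3 h4 hz1 hz2
    obtain ⟨p, -, hpu⟩ := P.partition z
    have e1 := hpu (v, k) ⟨⟨h1, h2⟩, hz1⟩
    have e2 := hpu (w, j) ⟨⟨h3, h4⟩, hz2⟩
    have := e1.trans e2.symm
    exact ⟨congrArg Prod.fst this, congrArg Prod.snd this⟩
  -- uniqueness for P'
  have uniq' : ∀ (z : X) (v : V') (k : ℕ) (w : V') (j : ℕ), 1 ≤ k → k ≤ P'.height v →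
      1 ≤ j → j ≤ P'.height w → z ∈ P'.piece v k → z ∈ P'.piece w j → v = w ∧ k = j := by
    intro z v k w j h1 h2 h3 h4 hz1 hz2
    obtain ⟨p, -, hpu⟩ := P'.partition z
    have e1 := hpu (v, k) ⟨⟨h1, h2⟩, hz1⟩
    have e2 := hpu (w, j) ⟨⟨h3, h4⟩, hz2⟩
    have := e1.trans e2.symm
    exact ⟨congrArg Prod.fst this, congrArg Prod.snd this⟩
  -- forward lemma for P'
  have L1 : ∀ j, j < h' → (⇑φ)^[j] x ∈ P'.piece v' (j + 1) := by
    intro j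
    induction j with
    | zero => intro _; simpa using hx
    | succ j ih =>
      intro hj
      have h1 : (⇑φ)^[j] x ∈ P'.piece v' (j + 1) := ih (Nat.lt_of_succ_lt hj)
      have ht := P'.tower v' (j + 1) (by omega) (by omega)
      rw [Function.iterate_succ_apply', ← ht]
      exact ⟨_, h1, rfl⟩
  -- forward lemma for P
  have fwd : ∀ (a : ℕ) (v : V), (⇑φ)^[a] x ∈ P.piece v 1 →
      ∀ j, j < P.height v → (⇑φ)^[a + j] x ∈ P.piece v (j + 1) := by
    intro a v ha j
    induction j with
    | zero => intro _; simpa using ha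
    | succ j ih =>
      intro hj
      have h1 : (⇑φ)^[a + j] x ∈ P.piece v (j + 1) := ih (Nat.lt_of_succ_lt hj)
      have ht := P.tower v (j + 1) (by omega) (by omega)
      have : (⇑φ)^[a + (j + 1)] x = φ ((⇑φ)^[a + j] x) := by
        rw [show a + (j + 1) = (a + j) + 1 from rfl, Function.iterate_succ_apply']
      rw [this, ← ht]
      exact ⟨_, h1, rfl⟩
  -- step from a roof piece lands in a base piece
  have step_base : ∀ (n : ℕ) (v : V), (⇑φ)^[n] x ∈ P.piece v (P.height v) →
      ∃ u, (⇑φ)^[n + 1] x ∈ P.piece u 1 := by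
    intro n v hn
    obtain ⟨⟨u, j⟩, ⟨⟨hj1, hj2⟩, hz⟩, -⟩ := P.partition ((⇑φ)^[n + 1] x)
    replace hj1 : 1 ≤ j := hj1
    replace hj2 : j ≤ P.height u := hj2
    replace hz : (⇑φ)^[n + 1] x ∈ P.piece u j := hz
    rcases Nat.lt_or_ge j 2 with hj | hj
    · exact ⟨u, by rwa [show j = 1 by omega] at hz⟩
    · exfalso
      have ht := P.tower u (j - 1) (by omega) (by omega)
      rw [show j - 1 + 1 = j by omega] at ht
      rw [← ht] at hz
      obtain ⟨z, hz1, hz2⟩ := hz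
      have hzz : z = (⇑φ)^[n] x := by
        have : φ z = φ ((⇑φ)^[n] x) := by
          rw [hz2, Function.iterate_succ_apply']
        exact φ.injective this
      rw [hzz] at hz1
      obtain ⟨rfl, h5⟩ := uniq _ v (P.height v) u (j - 1) (P.height_pos v) le_rfl (by omega)
        (by omega) hn hz1
      omega
  -- roof of orbit segment
  have roof_top : ∃ w, (⇑φ)^[h' - 1] x ∈ P.piece w (P.height w) := by
    have h1 : (⇑φ)^[h' - 1] x ∈ P'.piece v' h' := by
      have := L1 (h' - 1) (by omega)
      rwa [show h' - 1 + 1 = h' by omega] at this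
    have h2 : (⇑φ)^[h' - 1] x ∈ P.roof := hroof (Set.mem_iUnion.2 ⟨v', h1⟩)
    exact Set.mem_iUnion.1 h2
  -- covering claim
  have claimC : ∀ n, n < h' → ∃ (v : V) (a : ℕ), a ≤ n ∧ (⇑φ)^[a] x ∈ P.piece v 1 ∧
      n < a + P.height v ∧ (⇑φ)^[n] x ∈ P.piece v (n - a + 1) := by
    intro n
    induction n with
    | zero =>
      intro _
      -- x is in the base of P
      obtain ⟨⟨u, j⟩, ⟨⟨hj1, hj2⟩, hz⟩, -⟩ := P.partition x
      replace hj1 : 1 ≤ j := hj1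
      replace hj2 : j ≤ P.height u := hj2
      replace hz : x ∈ P.piece u j := hz
      have hj : j = 1 := by
        by_contra hne
        have hj2' : 2 ≤ j := by omega
        -- then φ⁻¹ x ∈ P.piece u (j-1), but φ⁻¹ x ∈ roof P' ⊆ roof P
        have ht := P.tower u (j - 1) (by omega) (by omega)
        rw [show j - 1 + 1 = j by omega] at ht
        have hz' : x ∈ φ '' P.piece u (j - 1) := ht ▸ hz
        obtain ⟨z, hz1, hz2⟩ := hz'
        -- z = φ⁻¹ x; also z ∈ roof P' : from P'-partition of z
        obtain ⟨⟨w', m'⟩, ⟨⟨hm1, hm2⟩, hzw⟩, -⟩ := P'.partition z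
        replace hm1 : 1 ≤ m' := hm1
        replace hm2 : m' ≤ P'.height w' := hm2
        replace hzw : z ∈ P'.piece w' m' := hzw
        have hm' : m' = P'.height w' := by
          by_contra hne'
          have ht' := P'.tower w' m' hm1 (by omega)
          have : x ∈ P'.piece w' (m' + 1) := by
            rw [← ht']; exact ⟨z, hzw, hz2⟩
          have := uniq' x v' 1 w' (m' + 1) le_rfl hh'pos (by omega) (by omega) hx this
          omega
        rw [hm'] at hzw
        have hzr : z ∈ P.roof := hroof (Set.mem_iUnion.2 ⟨w', hzw⟩)
        obtain ⟨w, hw⟩ := Set.mem_iUnion.1 hzr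
        -- z ∈ P.piece w (h w) and z ∈ P.piece u (j-1)
        obtain ⟨rfl, h5⟩ := uniq z w (P.height w) u (j - 1) (P.height_pos w) le_rfl (by omega)
          (by omega) hw hz1
        omega
      subst hj
      exact ⟨u, 0, le_rfl, by simpa using hz, by have := P.height_pos u; omega,
        by simpa using hz⟩
    | succ n ih =>
      intro hn
      obtain ⟨v, a, ha1, ha2, ha3, _⟩ := ih (by omega)
      rcases Nat.lt_or_ge (n + 1) (a + P.height v) with hlt | hge
      · refine ⟨v, a, by omega, ha2, hlt, ?_⟩
        have := fwd a v ha2 (n + 1 - a) (by omega)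
        rwa [show a + (n + 1 - a) = n + 1 by omega, show n + 1 - a + 1 = (n + 1 - a) + 1 from rfl]
          at this
      · -- n+1 = a + height v; previous point on roof
        have heq : n + 1 = a + P.height v := by omega
        have hroofn : (⇑φ)^[n] x ∈ P.piece v (P.height v) := by
          have := fwd a v ha2 (P.height v - 1) (by have := P.height_pos v; omega)
          rwa [show a + (P.height v - 1) = n by omega,
            show P.height v - 1 + 1 = P.height v by have := P.height_pos v; omega] at this
        obtain ⟨u, hu⟩ := step_base n v hroofn
        exact ⟨u, n + 1, le_rfl, hu, by have := P.height_pos u; omega, by simpa using hu⟩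
  -- definitions for the sum
  set c : ℕ → G := fun n => ∏ j ∈ Finset.range n, ξ ((⇑φ)^[j] x) with hc
  set F : ℕ → MonoidAlgebra ℤ G := fun n => MonoidAlgebra.of ℤ G ((c n)⁻¹) with hF
  set T : Finset (V × ℕ) :=
    (Finset.univ ×ˢ Finset.range h').filter (fun p => (⇑φ)^[p.2] x ∈ P.piece p.1 1) with hT
  have memT : ∀ p : V × ℕ, p ∈ T ↔ p.2 < h' ∧ (⇑φ)^[p.2] x ∈ P.piece p.1 1 := by
    intro p
    simp [hT, Finset.mem_filter, Finset.mem_product, and_comm]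
  -- cocycle along a P tower starting inside the orbit
  have c_step : ∀ (v : V) (a : ℕ), (⇑φ)^[a] x ∈ P.piece v 1 →
      c (a + P.height v) = c a * ξt v := by
    intro v a ha
    have h1 : ξt v = ∏ j ∈ Finset.range (P.height v), ξ ((⇑φ)^[j] ((⇑φ)^[a] x)) :=
      hξt v _ ha
    rw [hc]
    simp only []
    rw [Finset.prod_range_add]
    congr 1
    rw [h1]
    refine Finset.prod_congr rfl fun j _ => ?_
    rw [← Function.iterate_add_apply, Nat.add_comm j a]
  -- key rewriting of the LHS
  have key : (∑ v : V,
        (1 - MonoidAlgebra.of ℤ G ((ξt v)⁻¹)) *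
          (∑ k ∈ Finset.Icc 1 (P'.height v'),
            if P'.piece v' k ⊆ P.piece v 1 then MonoidAlgebra.of ℤ G ((ξtk' v' k)⁻¹) else 0))
      = ∑ p ∈ T, (F p.2 - F (p.2 + P.height p.1)) := by
    rw [hT, Finset.sum_filter, Finset.sum_product]
    refine Finset.sum_congr rfl fun v _ => ?_
    rw [Finset.mul_sum, ← hh'def, ← Finset.Ico_add_one_right_eq_Icc, Finset.sum_Ico_eq_sum_range]
    rw [show h' + 1 - 1 = h' by omega]
    refine Finset.sum_congr rfl fun i hi => ?_
    rw [Finset.mem_range] at hi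
    have hmem : (⇑φ)^[i] x ∈ P'.piece v' (1 + i) := by
      have := L1 i hi; rwa [Nat.add_comm] at this
    have hcond : (P'.piece v' (1 + i) ⊆ P.piece v 1) ↔ (⇑φ)^[i] x ∈ P.piece v 1 := by
      constructor
      · intro hsub; exact hsub hmem
      · intro hin
        obtain ⟨w, j, hj1, hj2, hsub⟩ := hfiner v' (1 + i) (by omega) (by omega)
        have := uniq _ w j v 1 hj1 hj2 le_rfl (P.height_pos v) (hsub hmem) hin
        obtain ⟨rfl, rfl⟩ := this
        exact hsub
    rw [mul_ite, mul_zero]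
    by_cases hin : (⇑φ)^[i] x ∈ P.piece v 1
    · rw [if_pos (hcond.2 hin), if_pos hin]
      have hk' : ξtk' v' (1 + i) = c i := by
        have := hξtk' v' (1 + i) (by omega) (by omega) x hx
        rw [this, hc]
        simp
      rw [hk']
      have hcs := c_step v i hin
      rw [hF]
      simp only []
      rw [hcs, sub_mul, one_mul, ← map_mul, mul_inv, mul_comm ((ξt v)⁻¹)]
    · rw [if_neg (fun h => hin (hcond.1 h)), if_neg hin]
  rw [key, Finset.sum_sub_distrib]
  -- the set of base times
  set S : Finset ℕ := T.image Prod.snd with hS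
  have sum1 : ∑ p ∈ T, F p.2 = ∑ n ∈ S, F n := (Finset.sum_image fun p hp q hq h =>
    Prod.ext ((uniq _ p.1 1 q.1 1 le_rfl (P.height_pos p.1) le_rfl (P.height_pos q.1)
      ((memT p).1 hp).2 (by rw [h]; exact ((memT q).1 hq).2)).1) h).symm
  -- the "next" map
  set g : V × ℕ → ℕ := fun p => p.2 + P.height p.1 with hg
  have g_inj : ∀ p ∈ T, ∀ q ∈ T, g p = g q → p = q := by
    intro p hp q hq hpq
    rw [memT] at hp hq
    rcases Nat.lt_trichotomy p.2 q.2 with hlt | heq | hgt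
    · exfalso
      have h2 : q.2 < p.2 + P.height p.1 := by
        have : 1 ≤ P.height q.1 := P.height_pos q.1
        simp only [hg] at hpq; omega
      have := fwd p.2 p.1 hp.2 (q.2 - p.2) (by omega)
      rw [show p.2 + (q.2 - p.2) = q.2 by omega] at this
      have h3 := uniq _ p.1 (q.2 - p.2 + 1) q.1 1 (by omega) (by simp only [hg] at hpq; omega) le_rfl (P.height_pos q.1) this hq.2
      omega
    · have := uniq _ p.1 1 q.1 1 le_rfl (P.height_pos p.1) le_rfl (P.height_pos q.1)
        hp.2 (by rw [heq]; exact hq.2)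
      exact Prod.ext this.1 heq
    · exfalso
      have h2 : p.2 < q.2 + P.height q.1 := by
        have : 1 ≤ P.height p.1 := P.height_pos p.1
        simp only [hg] at hpq; omega
      have := fwd q.2 q.1 hq.2 (p.2 - q.2) (by omega)
      rw [show q.2 + (p.2 - q.2) = p.2 by omega] at this
      have h3 := uniq _ q.1 (p.2 - q.2 + 1) p.1 1 (by omega) (by simp only [hg] at hpq; omega) le_rfl (P.height_pos p.1) this hp.2
      omega
  have sum2 : ∑ p ∈ T, F (g p) = ∑ m ∈ T.image g, F m := (Finset.sum_image g_inj).symm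
  -- each element of T has g p ≤ h'
  have g_le : ∀ p ∈ T, g p ≤ h' := by
    intro p hp
    rw [memT] at hp
    by_contra hgt
    push_neg at hgt
    -- then φ^[h'-1] x ∈ piece p.1 (h'-p.2) with h'-p.2 < height, contradicting roof
    have h1 := fwd p.2 p.1 hp.2 (h' - 1 - p.2) (by simp only [hg] at hgt; omega)
    rw [show p.2 + (h' - 1 - p.2) = h' - 1 by omega] at h1
    obtain ⟨w, hw⟩ := roof_top
    obtain ⟨h4, h5⟩ := uniq _ p.1 (h' - 1 - p.2 + 1) w (P.height w) (by omega)
      (by simp only [hg] at hgt; omega) (P.height_pos w) le_rfl h1 hw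
    rw [← h4] at h5
    simp only [hg] at hgt
    omega
  -- image of g
  have image_g : T.image g = insert h' (S.erase 0) := by
    ext m
    simp only [Finset.mem_image, Finset.mem_insert, Finset.mem_erase]
    constructor
    · rintro ⟨p, hp, rfl⟩
      rcases eq_or_lt_of_le (g_le p hp) with heq | hlt
      · exact Or.inl heq
      · right
        rw [memT] at hp
        have hpos : 1 ≤ P.height p.1 := P.height_pos p.1
        refine ⟨by simp only [hg]; omega, ?_⟩
        -- g p ∈ S
        have hroofp : (⇑φ)^[g p - 1] x ∈ P.piece p.1 (P.height p.1) := by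
          have := fwd p.2 p.1 hp.2 (P.height p.1 - 1) (by omega)
          rwa [show p.2 + (P.height p.1 - 1) = g p - 1 by simp only [hg]; omega,
            show P.height p.1 - 1 + 1 = P.height p.1 by omega] at this
        obtain ⟨u, hu⟩ := step_base (g p - 1) p.1 hroofp
        rw [show g p - 1 + 1 = g p by simp only [hg]; omega] at hu
        rw [hS, Finset.mem_image]
        exact ⟨(u, g p), (memT _).2 ⟨hlt, hu⟩, rfl⟩
    · rintro (rfl | ⟨hm0, hmS⟩)
      · -- h' = g p for some p ∈ T
        obtain ⟨w, hw⟩ := roof_top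
        obtain ⟨v, a, ha1, ha2, ha3, ha4⟩ := claimC (h' - 1) (by omega)
        have := uniq _ v (h' - 1 - a + 1) w (P.height w) (by omega) (by omega)
          (P.height_pos w) le_rfl ha4 hw
        obtain ⟨rfl, heq⟩ := this
        refine ⟨(v, a), (memT _).2 ⟨by omega, ha2⟩, ?_⟩
        simp only [hg]; omega
      · -- m ∈ S, m ≠ 0: m = g p for some p ∈ T
        rw [hS, Finset.mem_image] at hmS
        obtain ⟨q, hq, rfl⟩ := hmS
        rw [memT] at hq
        obtain ⟨v, a, ha1, ha2, ha3, ha4⟩ := claimC (q.2 - 1) (by omega)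
        -- if q.2 - 1 < a + height v - 1 then contradiction
        have heq : q.2 = a + P.height v := by
          by_contra hne
          have h1 := fwd a v ha2 (q.2 - a) (by omega)
          rw [show a + (q.2 - a) = q.2 by omega] at h1
          have := uniq _ v (q.2 - a + 1) q.1 1 (by omega) (by omega) le_rfl
            (P.height_pos q.1) h1 hq.2
          omega
        exact ⟨(v, a), (memT _).2 ⟨by omega, ha2⟩, by simp only [hg]; omega⟩
  -- 0 ∈ S
  have zero_mem : (0 : ℕ) ∈ S := by
    obtain ⟨v, a, ha1, ha2, ha3, ha4⟩ := claimC 0 (by omega)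
    rw [hS, Finset.mem_image]
    have ha0 : a = 0 := by omega
    subst ha0
    exact ⟨(v, 0), (memT _).2 ⟨by omega, ha2⟩, rfl⟩
  have h'_not : h' ∉ S.erase 0 := by
    intro hmem
    have := Finset.mem_of_mem_erase hmem
    rw [hS, Finset.mem_image] at this
    obtain ⟨p, hp, hpe⟩ := this
    rw [memT] at hp
    omega
  rw [sum1, sum2, image_g, Finset.sum_insert h'_not]
  have herase : ∑ m ∈ S.erase 0, F m = (∑ n ∈ S, F n) - F 0 := by
    rw [← Finset.sum_erase_add S F zero_mem]
    ring
  rw [herase]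
  have hF0 : F 0 = 1 := by
    have h0 : c 0 = 1 := by rw [hc]; exact Finset.prod_range_zero _
    rw [hF]
    simp only [h0, inv_one, map_one]
  have hFh' : F h' = MonoidAlgebra.of ℤ G ((ξt' v')⁻¹) := by
    rw [hF, hc]
    simp only []
    rw [hξt' v' x hx]
  rw [hF0, hFh']
  ring
end

section
/- The ℤ²-action ω on Z = X × Y × G generated by the commuting homeomorphisms φ̃ and ψ̃ is minimal: the only nonempty closed subset of Z that is invariant under both φ̃ and ψ̃ is Z itself (equivalently, every orbit under the group of homeomorphisms generated by φ̃ and ψ̃ is dense in Z). -/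
variable {X Y G : Type*} [TopologicalSpace X] [TopologicalSpace Y]
  [TopologicalSpace G] [CommGroup G] [IsTopologicalGroup G]

/-- The skew product homeomorphism φ×ξ of X × G, (φ×ξ)(x,g) = (φ(x), gξ(x)).
A cocycle ξ is non-degenerate when this homeomorphism is minimal. -/
def skewProd (φ : X ≃ₜ X) (ξ : C(X, G)) : (X × G) ≃ₜ (X × G) where
  toFun z := (φ z.1, z.2 * ξ z.1)
  invFun z := (φ.symm z.1, z.2 * (ξ (φ.symm z.1))⁻¹)
  left_inv z := by simp
  right_inv z := by simp
  continuous_toFun := by fun_prop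
  continuous_invFun := by fun_prop

/-- The homeomorphism φ̃(x,y,g) = (φ(x), y, gξ(x)) of Z = X × Y × G. -/
def phiTilde (φ : X ≃ₜ X) (ξ : C(X, G)) : (X × Y × G) ≃ₜ (X × Y × G) where
  toFun z := (φ z.1, z.2.1, z.2.2 * ξ z.1)
  invFun z := (φ.symm z.1, z.2.1, z.2.2 * (ξ (φ.symm z.1))⁻¹)
  left_inv z := by simp
  right_inv z := by simp
  continuous_toFun := by fun_prop
  continuous_invFun := by fun_prop

/-- The homeomorphism ψ̃(x,y,g) = (x, ψ(y), gη(y)) of Z = X × Y × G. -/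
def psiTilde (ψ : Y ≃ₜ Y) (η : C(Y, G)) : (X × Y × G) ≃ₜ (X × Y × G) where
  toFun z := (z.1, ψ z.2.1, z.2.2 * η z.2.1)
  invFun z := (z.1, ψ.symm z.2.1, z.2.2 * (η (ψ.symm z.2.1))⁻¹)
  left_inv z := by simp
  right_inv z := by simp
  continuous_toFun := by fun_prop
  continuous_invFun := by fun_prop

/-!
On each fibre `{x} × Y × G` the map `ψ̃` is a copy of the skew product `ψ × η`, so by minimality
of `ψ × η` a closed `ψ̃`-invariant set containing one point of the fibre contains the whole fibre.
Likewise `φ̃` acts on each `X × {y} × G` as `φ × ξ`. Starting from any point of `F`, one move of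
each kind reaches every point of `Z`.
-/

open Function
open scoped Pointwise

section

variable {α β : Type*}

theorem Equiv.Perm.zpow_apply_mem_of_image_eq {e : Equiv.Perm α} {F : Set α} (h : e '' F = F)
    (m : ℤ) {z : α} (hz : z ∈ F) : (e ^ m) z ∈ F := by
  have he : e ∈ MulAction.stabilizer (Equiv.Perm α) F := h
  have hm : (e ^ m) • F = F := zpow_mem he m
  rw [← hm]
  exact Set.smul_mem_smul_set hz

theorem Function.Semiconj.perm_zpow {f : α → β} {e : Equiv.Perm α} {e' : Equiv.Perm β}
    (h : Semiconj f e e') (m : ℤ) : Semiconj f ⇑(e ^ m) ⇑(e' ^ m) := by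
  induction m using Int.induction_on with
  | zero => exact Semiconj.id_right
  | succ n ih =>
    rw [zpow_add_one, zpow_add_one, Equiv.Perm.coe_mul, Equiv.Perm.coe_mul]
    exact ih.comp_right h
  | pred n ih =>
    rw [zpow_sub_one, zpow_sub_one, Equiv.Perm.coe_mul, Equiv.Perm.coe_mul]
    exact ih.comp_right (h.inverses_right e.right_inv e'.left_inv)

variable [TopologicalSpace α] [TopologicalSpace β]

theorem IsMinimalHomeo.range_subset_of_semiconj {e : α ≃ₜ α} (he : IsMinimalHomeo e)
    {e' : Equiv.Perm β} {f : α → β} (hf : Continuous f) (h : Semiconj f e e')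
    {F : Set β} (hF : IsClosed F) (hinv : e' '' F = F) {a : α} (ha : f a ∈ F) :
    Set.range f ⊆ F := by
  have orbit_subset : f '' Set.range (fun k : ℤ => (e.toEquiv ^ k) a) ⊆ F := by
    rintro _ ⟨_, ⟨k, rfl⟩, rfl⟩
    rw [(h.perm_zpow k).eq]
    exact Equiv.Perm.zpow_apply_mem_of_image_eq hinv k ha
  calc Set.range f = f '' closure (Set.range fun k : ℤ => (e.toEquiv ^ k) a) := by
        rw [(he a).closure_eq, Set.image_univ]
    _ ⊆ closure (f '' Set.range fun k : ℤ => (e.toEquiv ^ k) a) :=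
        image_closure_subset_closure_image hf
    _ ⊆ F := hF.closure_subset_iff.mpr orbit_subset

end

theorem statement16_general
    (X Y G : Type) [TopologicalSpace X] [TopologicalSpace Y]
    [TopologicalSpace G] [CommGroup G] [IsTopologicalGroup G]
    (φ : X ≃ₜ X) (ψ : Y ≃ₜ Y)
    (ξ : C(X, G)) (η : C(Y, G))
    (hξ : IsMinimalHomeo (skewProd φ ξ))
    (hη : IsMinimalHomeo (skewProd ψ η)) :
    ∀ F : Set (X × Y × G), IsClosed F → F.Nonempty →
      (phiTilde φ ξ) '' F = F → (psiTilde ψ η) '' F = F → F = Set.univ := by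
  rintro F hF ⟨z₀, hz₀⟩ hφF hψF
  have fill_YG : ∀ z ∈ F, ∀ w : Y × G, (z.1, w) ∈ F := fun z hz w =>
    hη.range_subset_of_semiconj (e' := (psiTilde ψ η).toEquiv) (f := fun w => (z.1, w))
      (by fun_prop) (fun _ => rfl) hF hψF (a := z.2) hz ⟨w, rfl⟩
  have fill_XG : ∀ z ∈ F, ∀ w : X × G, (w.1, z.2.1, w.2) ∈ F := fun z hz w =>
    hξ.range_subset_of_semiconj (e' := (phiTilde φ ξ).toEquiv) (f := fun w => (w.1, z.2.1, w.2))
      (by fun_prop) (fun _ => rfl) hF hφF (a := (z.1, z.2.2)) hz ⟨w, rfl⟩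
  exact Set.eq_univ_of_forall fun z => fill_XG _ (fill_YG z₀ hz₀ (z.2.1, 1)) (z.1, z.2.2)

/-- The ℤ²-action on Z = X × Y × G generated by φ̃ and ψ̃ is minimal: the only nonempty
closed subset of Z invariant under both φ̃ and ψ̃ is Z itself. -/
theorem statement16
    (X Y G : Type) [TopologicalSpace X] [TopologicalSpace Y]
    [TopologicalSpace G] [DiscreteTopology G] [CommGroup G] [IsTopologicalGroup G] [Fintype G]
    (hX : IsCantor X) (hY : IsCantor Y)
    (φ : X ≃ₜ X) (ψ : Y ≃ₜ Y)
    (hφ : IsMinimalHomeo φ) (hψ : IsMinimalHomeo ψ)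
    (ξ : C(X, G)) (η : C(Y, G))
    (hξ : IsMinimalHomeo (skewProd φ ξ))
    (hη : IsMinimalHomeo (skewProd ψ η)) :
    ∀ F : Set (X × Y × G), IsClosed F → F.Nonempty →
      (phiTilde φ ξ) '' F = F → (psiTilde ψ η) '' F = F → F = Set.univ :=
  statement16_general X Y G φ ψ ξ η hξ hη
end
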